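/- For every ε ≥ 0 and every function f with f(ℓ) ≥ (1/2 + ε)(ℓ−1) for all ℓ, the variable quasi-Ramsey number satisfies, as k → ∞, R_f(k) ≥ (1+o(1))·(k/e)·exp(((k−1)/2)·Λ*(1/2 − ε)). -/

import Mathlib

open scoped Classical ENNReal

/-- `Λ*(x) = x ln(2x) + (1-x) ln(2(1-x))` with `Real.log 0 = 0` giving `0·ln 0 = 0`. -/
noncomputable def LambdaStar (x : ℝ) : ℝ :=
  x * Real.log (2 * x) + (1 - x) * Real.log (2 * (1 - x))

/-- `S` is a `t`-homogeneous set of `G`: `G[S]` or its complement has min degree `≥ t`. -/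
def IsHomog {n : ℕ} (G : SimpleGraph (Fin n)) (S : Finset (Fin n)) (t : ℝ) : Prop :=
  (∀ v ∈ S, t ≤ ((S.filter (G.Adj v)).card : ℝ)) ∨
  (∀ v ∈ S, t ≤ ((S.filter (Gᶜ.Adj v)).card : ℝ))

/-- The variable quasi-Ramsey number `R_f(k)`, as an extended real so that it is `⊤`
when no `N` works (which corresponds to `Λ* = ∞` outside `[0,1]`). -/
noncomputable def Rvar (f : ℕ → ℝ) (k : ℕ) : ℝ≥0∞ :=
  sInf {n : ℝ≥0∞ | ∃ N : ℕ, n = N ∧ ∀ G : SimpleGraph (Fin N),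
    ∃ S : Finset (Fin N), k ≤ S.card ∧ IsHomog G S (f S.card)}

/-!
Colour the pairs of `Fin N` uniformly at random and take the `true` pairs as edges. If an
`ℓ`-set `S` is `f ℓ`-homogeneous, summing degrees inside `S` shows that one colour occupies at
least `(1/2 + ε) C(ℓ, 2)` of its pairs; by the entropy (Chernoff) bound this happens with
probability at most `2 exp (-C(ℓ, 2) Λ*(1/2 - ε))`. Together with `C(N, ℓ) ≤ (e N / ℓ) ^ ℓ`, the
expected number of homogeneous sets of order `ℓ ≥ k` is at most `2 (1 - δ) ^ ℓ` as soon as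
`N < (1 - δ) (k / e) exp ((k - 1) Λ*(1/2 - ε) / 2)`, and this geometric series is below one for
large `k`. For `ε > 1/2` no set of order `ℓ ≥ 2` is `f ℓ`-homogeneous, since degrees inside it
are at most `ℓ - 1 < f ℓ`; then `R_f(k) = ⊤`.
-/

open Finset Real

theorem lambdaStar_eq_log_two_sub_binEntropy (x : ℝ) : LambdaStar x = log 2 - binEntropy x := by
  -- the factor `y` keeps this true at `y = 0`, where `log 0 = 0`
  have hlog (y : ℝ) : y * log (2 * y) = y * log 2 - y * log y⁻¹ := by
    rcases eq_or_ne y 0 with rfl | hy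
    · simp
    · rw [log_mul two_ne_zero hy, log_inv]; ring
  rw [LambdaStar, binEntropy, hlog, hlog]
  ring

theorem lambdaStar_nonneg (x : ℝ) : 0 ≤ LambdaStar x := by
  rw [lambdaStar_eq_log_two_sub_binEntropy]
  exact sub_nonneg.2 binEntropy_le_log_two

theorem card_powerset_filter_le_exp_binEntropy {γ : Type*} (A : Finset γ) {a : ℝ}
    (ha : 1 / 2 ≤ a) (ha₁ : a ≤ 1) :
    (#{B ∈ A.powerset | a * #A ≤ #B} : ℝ) ≤ exp (#A * binEntropy a) := by
  rcases ha₁.eq_or_lt with rfl | ha₁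
  · have : {B ∈ A.powerset | 1 * (#A : ℝ) ≤ #B} ⊆ {A} := fun B hB => by
      simp only [mem_filter, mem_powerset, one_mul, Nat.cast_le] at hB
      exact mem_singleton.2 (eq_of_subset_of_card_le hB.1 hB.2)
    simpa using (card_le_card this).trans (card_singleton A).le
  -- Chernoff: weight each `B ⊆ A` by `a ^ #B (1 - a) ^ (#A - #B)`; the weights sum to one,
  -- and each `B` in the filter has weight at least `exp (-#A * binEntropy a)`.
  have ha₀ : 0 < a := by linarith
  have hb₀ : 0 < 1 - a := by linarith
  have hweight : ∀ B ∈ {B ∈ A.powerset | a * #A ≤ #B},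
      exp (-(#A * binEntropy a)) ≤ a ^ #B * (1 - a) ^ (#A - #B) := by
    intro B hB
    simp only [mem_filter, mem_powerset] at hB
    have hpow : a ^ #B * (1 - a) ^ (#A - #B) = exp (#B * log a + (#A - #B : ℕ) * log (1 - a)) := by
      rw [exp_add, exp_nat_mul, exp_nat_mul, exp_log ha₀, exp_log hb₀]
    rw [hpow, exp_le_exp, Nat.cast_sub (card_le_card hB.1), binEntropy, log_inv, log_inv]
    have : log (1 - a) ≤ log a := log_le_log hb₀ (by linarith)
    nlinarith
  have hsum := sum_pow_mul_eq_add_pow a (1 - a) A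
  rw [add_sub_cancel, one_pow] at hsum
  have := (card_nsmul_le_sum _ _ _ hweight).trans
    (sum_le_sum_of_subset_of_nonneg (filter_subset _ A.powerset)
      (fun B _ _ => by positivity))
  rw [hsum, nsmul_eq_mul, exp_neg, ← div_eq_mul_inv, div_le_one (exp_pos _)] at this
  exact this

theorem card_filter_colorings_le_card_filter_powerset_mul {γ : Type*} [Fintype γ] [DecidableEq γ]
    (A : Finset γ) (b : Bool) (P : Finset γ → Prop) [DecidablePred P] :
    #{ω : γ → Bool | P {e ∈ A | ω e = b}} ≤
      #{B ∈ A.powerset | P B} * 2 ^ (Fintype.card γ - #A) := by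
  have hrest : Fintype.card ({e // e ∉ A} → Bool) = 2 ^ (Fintype.card γ - #A) := by
    rw [Fintype.card_fun, Fintype.card_bool, Fintype.card_subtype_compl, Fintype.card_coe]
  rw [← hrest, ← card_univ, ← card_product]
  refine card_le_card_of_injOn (fun ω => ({e ∈ A | ω e = b}, fun e => ω e)) ?_ ?_
  · intro ω hω
    simpa using hω
  · intro ω₁ _ ω₂ _ h
    simp only [Prod.mk.injEq] at h
    funext e
    by_cases he : e ∈ A
    · have := congrArg (e ∈ ·) h.1
      simp only [mem_filter, he, true_and, eq_iff_iff] at this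
      cases b <;> simpa using this
    · exact congrFun h.2 ⟨e, he⟩

theorem card_eq_two_mul_card_image_sym2Mk_of_swap_mem {α : Type*} [DecidableEq α]
    {T : Finset (α × α)} (hT : ∀ q ∈ T, q.1 ≠ q.2 ∧ q.swap ∈ T) :
    #T = 2 * #(T.image Sym2.mk.uncurry) := by
  rw [card_eq_sum_card_image (Sym2.mk.uncurry : α × α → _), mul_comm, ← smul_eq_mul, ← sum_const]
  refine sum_congr rfl fun e he => ?_
  obtain ⟨q, hq, rfl⟩ := mem_image.1 he
  have : {z ∈ T | Sym2.mk.uncurry z = Sym2.mk.uncurry q} = {q, q.swap} := by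
    ext z
    simp only [mem_filter, mem_insert, mem_singleton, Function.uncurry, Sym2.eq_iff]
    constructor
    · rintro ⟨-, ⟨h1, h2⟩ | ⟨h1, h2⟩⟩
      · exact Or.inl (Prod.ext h1 h2)
      · exact Or.inr (Prod.ext h1 h2)
    · rintro (rfl | rfl)
      · exact ⟨hq, Or.inl ⟨rfl, rfl⟩⟩
      · exact ⟨(hT q hq).2, Or.inr ⟨rfl, rfl⟩⟩
  rw [this, card_pair]
  exact fun h => (hT q hq).1 (congrArg Prod.snd h).symm

theorem sum_card_filter_eq_two_mul_card_filter_image_offDiag {α : Type*} [DecidableEq α]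
    (S : Finset α) (P : Sym2 α → Prop) [DecidablePred P] :
    ∑ v ∈ S, #{u ∈ S | v ≠ u ∧ P s(v, u)} =
      2 * #{e ∈ S.offDiag.image Sym2.mk.uncurry | P e} := by
  calc ∑ v ∈ S, #{u ∈ S | v ≠ u ∧ P s(v, u)}
      = #{q ∈ S ×ˢ S | q.1 ≠ q.2 ∧ P s(q.1, q.2)} := by
        simp only [card_filter, sum_product]
    _ = #{q ∈ S.offDiag | P s(q.1, q.2)} := by
        congr 1; ext q; simp only [mem_filter, mem_product, mem_offDiag, and_assoc]
    _ = 2 * #{e ∈ S.offDiag.image Sym2.mk.uncurry | P e} := by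
        rw [filter_image]
        refine card_eq_two_mul_card_image_sym2Mk_of_swap_mem fun q hq => ?_
        obtain ⟨hq, hP⟩ := mem_filter.1 hq
        obtain ⟨h₁, h₂, hne⟩ := mem_offDiag.1 hq
        refine ⟨hne, mem_filter.2 ⟨mem_offDiag.2 ⟨h₂, h₁, hne.symm⟩, ?_⟩⟩
        rwa [Prod.fst_swap, Prod.snd_swap, Sym2.eq_swap]

theorem card_le_of_forall_le_card_filter_color {α : Type*} [Fintype α] [DecidableEq α]
    (S : Finset α) {ε t : ℝ} (hε : 0 ≤ ε) (hε' : ε ≤ 1 / 2) (ht : (1 / 2 + ε) * (#S - 1) ≤ t)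
    (b : Bool) (T : Finset (Sym2 α → Bool))
    (hT : ∀ ω ∈ T, ∀ v ∈ S, t ≤ #{u ∈ S | v ≠ u ∧ ω s(v, u) = b}) :
    (#T : ℝ) ≤
      2 ^ Fintype.card (Sym2 α) * exp (-((#S).choose 2) * LambdaStar (1 / 2 - ε)) := by
  set A := S.offDiag.image Sym2.mk.uncurry
  set M := Fintype.card (Sym2 α)
  have hAc : #A = (#S).choose 2 := Sym2.card_image_offDiag S
  have hA : (#A : ℝ) = #S * (#S - 1) / 2 := by rw [hAc, Nat.cast_choose_two]
  have hsub : T ⊆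
      ({ω | (1 / 2 + ε) * #A ≤ #{e ∈ A | ω e = b}} : Finset (Sym2 α → Bool)) := by
    intro ω hω
    rw [mem_filter, and_iff_right (mem_univ _)]
    have hsum := card_nsmul_le_sum _ _ _ (hT ω hω)
    rw [nsmul_eq_mul, ← Nat.cast_sum,
      sum_card_filter_eq_two_mul_card_filter_image_offDiag S (ω · = b)] at hsum
    push_cast at hsum
    nlinarith [mul_le_mul_of_nonneg_left ht (Nat.cast_nonneg (α := ℝ) #S)]
  have hcount := (card_le_card hsub).trans
    (card_filter_colorings_le_card_filter_powerset_mul A b fun B => (1 / 2 + ε) * #A ≤ #B)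
  have hAM : #A ≤ M := card_le_univ A
  calc (#T : ℝ)
      ≤ #{B ∈ A.powerset | (1 / 2 + ε) * #A ≤ #B} * 2 ^ (M - #A) := by exact_mod_cast hcount
    _ ≤ exp (#A * binEntropy (1 / 2 + ε)) * 2 ^ (M - #A) := by
        gcongr
        exact card_powerset_filter_le_exp_binEntropy A (by linarith) (by linarith)
    _ = 2 ^ M * exp (-((#S).choose 2) * LambdaStar (1 / 2 - ε)) := by
        have h2 : (2 : ℝ) ^ M = exp (#A * log 2) * 2 ^ (M - #A) := by
          rw [exp_nat_mul, exp_log two_pos, pow_mul_pow_sub 2 hAM]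
        have hH : binEntropy (1 / 2 - ε) = binEntropy (1 / 2 + ε) := by
          rw [← binEntropy_one_sub]; ring_nf
        rw [h2, ← hAc, lambdaStar_eq_log_two_sub_binEntropy, hH, mul_right_comm, ← exp_add]
        ring_nf

theorem IsHomog.le_card_sub_one {N : ℕ} {G : SimpleGraph (Fin N)} {S : Finset (Fin N)} {t : ℝ}
    (h : IsHomog G S t) {v : Fin N} (hv : v ∈ S) : t ≤ #S - 1 := by
  have hle (H : SimpleGraph (Fin N)) [DecidableRel H.Adj] :
      (#(S.filter (H.Adj v)) : ℝ) ≤ #S - 1 := by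
    rw [← Nat.cast_pred (card_pos.2 ⟨v, hv⟩), ← card_erase_of_mem hv, Nat.cast_le]
    exact card_le_card fun u hu => mem_erase.2 ⟨(mem_filter.1 hu).2.ne', (mem_filter.1 hu).1⟩
  rcases h with h | h
  · exact (h v hv).trans (hle G)
  · exact (h v hv).trans (hle Gᶜ)

theorem IsHomog.exists_color {N : ℕ} {ω : Sym2 (Fin N) → Bool} {S : Finset (Fin N)} {t : ℝ}
    (h : IsHomog (SimpleGraph.fromEdgeSet {e | ω e = true}) S t) :
    ∃ b, ∀ v ∈ S, t ≤ #{u ∈ S | v ≠ u ∧ ω s(v, u) = b} := by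
  rcases h with h | h
  · refine ⟨true, fun v hv => (h v hv).trans_eq ?_⟩
    congr 2; ext u; simp [and_comm]
  · refine ⟨false, fun v hv => (h v hv).trans_eq ?_⟩
    congr 2; ext u; cases ω s(v, u) <;> simp +contextual

theorem choose_le_exp_mul_div_pow (n k : ℕ) : (n.choose k : ℝ) ≤ (exp 1 * n / k) ^ k := by
  rcases k.eq_zero_or_pos with rfl | hk
  · simp
  have hk' : (0 : ℝ) < k := Nat.cast_pos.2 hk
  calc (n.choose k : ℝ) ≤ n ^ k / k.factorial := Nat.choose_le_pow_div k n
    _ = (n / k) ^ k * (k ^ k / k.factorial) := by rw [div_pow]; field_simp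
    _ ≤ (n / k) ^ k * exp k := by gcongr; exact pow_div_factorial_le_exp _ hk'.le k
    _ = (exp 1 * n / k) ^ k := by rw [← exp_one_pow]; ring

theorem choose_mul_exp_neg_le_pow {N k ℓ : ℕ} {r c : ℝ} (hk : 0 < k) (hkℓ : k ≤ ℓ) (hc : 0 ≤ c)
    (hr : 0 ≤ r) (hN : N ≤ r * (k / exp 1) * exp ((k - 1) / 2 * c)) :
    N.choose ℓ * exp (-(ℓ.choose 2) * c) ≤ r ^ ℓ := by
  set E := exp ((k - 1) / 2 * c)
  have hk' : (0 : ℝ) < k := Nat.cast_pos.2 hk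
  have hkℓ' : (k : ℝ) ≤ ℓ := Nat.cast_le.2 hkℓ
  have hbase : exp 1 * N / ℓ ≤ r * E :=
    calc exp 1 * N / ℓ ≤ exp 1 * N / k := by gcongr
      _ ≤ r * E := by
        rw [div_le_iff₀ hk']
        calc exp 1 * N ≤ exp 1 * (r * (k / exp 1) * E) := by gcongr
          _ = r * E * k := by field_simp
  have hexp : exp (-(ℓ.choose 2) * c) ≤ (E ^ ℓ)⁻¹ := by
    rw [← exp_nat_mul, ← exp_neg, exp_le_exp, Nat.cast_choose_two]
    nlinarith [mul_nonneg (mul_nonneg hc hk'.le) (sub_nonneg.2 hkℓ')]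
  calc N.choose ℓ * exp (-(ℓ.choose 2) * c) ≤ (r * E) ^ ℓ * (E ^ ℓ)⁻¹ := by
        gcongr
        exact (choose_le_exp_mul_div_pow N ℓ).trans (by gcongr)
    _ = r ^ ℓ := by rw [mul_pow, mul_inv_cancel_right₀ (pow_ne_zero _ (exp_pos _).ne')]

theorem sum_choose_mul_exp_neg_lt_one {N k : ℕ} {r c : ℝ} (hk : 0 < k) (hc : 0 ≤ c) (hr : 0 ≤ r)
    (hrk : 2 * r ^ k < 1 - r) (hN : N ≤ r * (k / exp 1) * exp ((k - 1) / 2 * c)) :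
    ∑ ℓ ∈ Icc k N, 2 * N.choose ℓ * exp (-(ℓ.choose 2) * c) < 1 := by
  have hr₁ : 0 < 1 - r := by nlinarith [pow_nonneg hr k]
  calc ∑ ℓ ∈ Icc k N, 2 * N.choose ℓ * exp (-(ℓ.choose 2) * c)
      ≤ 2 * ∑ ℓ ∈ Ico k (N + 1), r ^ ℓ := by
        rw [mul_sum, ← Ico_add_one_right_eq_Icc]
        exact sum_le_sum fun ℓ hℓ => by
          rw [mul_assoc]
          exact mul_le_mul_of_nonneg_left
            (choose_mul_exp_neg_le_pow hk (mem_Icc.1 hℓ).1 hc hr hN) two_pos.le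
    _ ≤ 2 * (r ^ k / (1 - r)) := by gcongr; exact geom_sum_Ico_le_of_lt_one hr (by linarith)
    _ < 1 := by rw [← mul_div_assoc, div_lt_one hr₁]; exact hrk

theorem card_le_of_forall_isHomog {N : ℕ} (S : Finset (Fin N)) {ε t : ℝ} (hε : 0 ≤ ε)
    (hε' : ε ≤ 1 / 2) (ht : (1 / 2 + ε) * (#S - 1) ≤ t) (T : Finset (Sym2 (Fin N) → Bool))
    (hT : ∀ ω ∈ T, IsHomog (SimpleGraph.fromEdgeSet {e | ω e = true}) S t) :
    (#T : ℝ) ≤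
      2 * (2 ^ Fintype.card (Sym2 (Fin N)) * exp (-((#S).choose 2) * LambdaStar (1 / 2 - ε))) := by
  rw [← card_filter_add_card_filter_not
    (fun ω => ∀ v ∈ S, t ≤ #{u ∈ S | v ≠ u ∧ ω s(v, u) = true}), Nat.cast_add, two_mul]
  refine add_le_add (card_le_of_forall_le_card_filter_color S hε hε' ht true _
    fun ω hω => (mem_filter.1 hω).2) (card_le_of_forall_le_card_filter_color S hε hε' ht false _
    fun ω hω => ?_)
  obtain ⟨hωT, hne⟩ := mem_filter.1 hω
  obtain ⟨_ | _, hb⟩ := (hT ω hωT).exists_color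
  exacts [hb, absurd hb hne]

theorem exists_graph_forall_not_isHomog {N k : ℕ} {ε : ℝ} (hε : 0 ≤ ε) (hε' : ε ≤ 1 / 2)
    {f : ℕ → ℝ} (hf : ∀ ℓ : ℕ, (1 / 2 + ε) * ((ℓ : ℝ) - 1) ≤ f ℓ)
    (hsum : ∑ ℓ ∈ Icc k N, 2 * N.choose ℓ * exp (-(ℓ.choose 2) * LambdaStar (1 / 2 - ε)) < 1) :
    ∃ G : SimpleGraph (Fin N), ∀ S : Finset (Fin N), k ≤ #S → ¬ IsHomog G S (f #S) := by
  set M := Fintype.card (Sym2 (Fin N))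
  set bad : Finset (Sym2 (Fin N) → Bool) :=
    {ω | ∃ S : Finset (Fin N), k ≤ #S ∧
      IsHomog (SimpleGraph.fromEdgeSet {e | ω e = true}) S (f #S)}
  have hsub : bad ⊆ (Icc k N).biUnion fun ℓ => (univ.powersetCard ℓ).biUnion fun S =>
      {ω | IsHomog (SimpleGraph.fromEdgeSet {e | ω e = true}) S (f #S)} := by
    intro ω hω
    obtain ⟨S, hkS, hS⟩ := (mem_filter.1 hω).2
    simp only [mem_biUnion, mem_Icc, mem_powersetCard_univ, mem_filter, mem_univ, true_and]
    exact ⟨#S, ⟨hkS, card_le_univ S |>.trans_eq (Fintype.card_fin N)⟩, S, rfl, hS⟩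
  have hbad : (#bad : ℝ) < 2 ^ M :=
    calc (#bad : ℝ)
        ≤ ∑ ℓ ∈ Icc k N, ∑ S ∈ univ.powersetCard ℓ,
            (#{ω : Sym2 (Fin N) → Bool |
              IsHomog (SimpleGraph.fromEdgeSet {e | ω e = true}) S (f #S)} : ℝ) := by
          exact_mod_cast (card_le_card hsub).trans
            (card_biUnion_le.trans (sum_le_sum fun ℓ _ => card_biUnion_le))
      _ ≤ ∑ ℓ ∈ Icc k N, ∑ S ∈ univ.powersetCard ℓ,
            2 * (2 ^ M * exp (-(ℓ.choose 2) * LambdaStar (1 / 2 - ε))) := by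
          refine sum_le_sum fun ℓ _ => sum_le_sum fun S hS => ?_
          rw [← (mem_powersetCard_univ.1 hS)]
          exact card_le_of_forall_isHomog S hε hε' (hf _) _ fun ω hω => (mem_filter.1 hω).2
      _ = 2 ^ M *
            ∑ ℓ ∈ Icc k N, 2 * N.choose ℓ * exp (-(ℓ.choose 2) * LambdaStar (1 / 2 - ε)) := by
          simp only [sum_const, card_powersetCard, card_univ, Fintype.card_fin, nsmul_eq_mul,
            mul_sum]
          exact sum_congr rfl fun ℓ _ => by ring
      _ < 2 ^ M := mul_lt_of_lt_one_right (by positivity) hsum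
  obtain ⟨ω, -, hω⟩ : ∃ ω ∈ univ, ω ∉ bad := by
    refine exists_mem_notMem_of_card_lt_card ?_
    rw [card_univ, Fintype.card_fun, Fintype.card_bool]
    exact_mod_cast hbad
  exact ⟨_, fun S hkS hS => hω (mem_filter.2 ⟨mem_univ _, S, hkS, hS⟩)⟩

theorem ofReal_le_rvar {f : ℕ → ℝ} {k : ℕ} {x : ℝ}
    (h : ∀ N : ℕ, (N : ℝ) < x →
      ∃ G : SimpleGraph (Fin N), ∀ S : Finset (Fin N), k ≤ #S → ¬ IsHomog G S (f #S)) :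
    ENNReal.ofReal x ≤ Rvar f k := by
  refine le_sInf ?_
  rintro _ ⟨N, rfl, hN⟩
  rw [← ENNReal.ofReal_natCast]
  refine ENNReal.ofReal_le_ofReal (not_lt.1 fun hlt => ?_)
  obtain ⟨G, hG⟩ := h N hlt
  obtain ⟨S, hkS, hS⟩ := hN G
  exact hG S hkS hS

theorem rvar_eq_top {ε : ℝ} (hε : 1 / 2 < ε) {f : ℕ → ℝ}
    (hf : ∀ ℓ : ℕ, (1 / 2 + ε) * ((ℓ : ℝ) - 1) ≤ f ℓ) {k : ℕ} (hk : 2 ≤ k) : Rvar f k = ⊤ := by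
  refine sInf_eq_top.2 fun _ ⟨N, _, hN⟩ => ?_
  obtain ⟨S, hkS, hS⟩ := hN ⊥
  obtain ⟨v, hv⟩ : S.Nonempty := card_pos.1 (by omega)
  have h2S : (2 : ℝ) ≤ #S := by exact_mod_cast hk.trans hkS
  nlinarith [hS.le_card_sub_one hv, hf #S]

theorem variable_quasi_ramsey_lower (ε : ℝ) (hε : 0 ≤ ε) (f : ℕ → ℝ)
    (hf : ∀ ℓ : ℕ, (1 / 2 + ε) * ((ℓ : ℝ) - 1) ≤ f ℓ)
    (δ : ℝ) (hδ : 0 < δ) :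
    ∀ᶠ k : ℕ in Filter.atTop,
      ENNReal.ofReal ((1 - δ) * ((k : ℝ) / Real.exp 1)) *
          (if ε ≤ 1 / 2 then
            ENNReal.ofReal (Real.exp (((k : ℝ) - 1) / 2 * LambdaStar (1 / 2 - ε)))
          else ⊤) ≤
        Rvar f k := by
  rcases le_or_gt 1 δ with hδ₁ | hδ₁
  · refine Filter.Eventually.of_forall fun k => ?_
    rw [ENNReal.ofReal_of_nonpos (mul_nonpos_of_nonpos_of_nonneg (by linarith) (by positivity)),
      zero_mul]
    exact zero_le
  rcases le_or_gt ε (1 / 2) with hε' | hε'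
  · have hsmall : ∀ᶠ k : ℕ in Filter.atTop, 2 * (1 - δ) ^ k < 1 - (1 - δ) :=
      (tendsto_pow_atTop_nhds_zero_of_lt_one (by linarith) (by linarith)).const_mul 2
        |>.eventually (gt_mem_nhds (by simpa using hδ))
    filter_upwards [hsmall, Filter.eventually_gt_atTop 0] with k hk hk₀
    rw [if_pos hε', ← ENNReal.ofReal_mul (mul_nonneg (by linarith) (by positivity))]
    exact ofReal_le_rvar fun N hN => exists_graph_forall_not_isHomog hε hε' hf
      (sum_choose_mul_exp_neg_lt_one hk₀ (lambdaStar_nonneg _) (by linarith) hk hN.le)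
  · filter_upwards [Filter.eventually_ge_atTop 2] with k hk
    rw [rvar_eq_top hε' hf hk]
    exact le_top
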